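/- Let R, S, T be monads on a category C, let τ : TR ⇒ RT and λ : TS ⇒ ST be weak distributive laws, and let γ : R ⇒ S be a monad morphism such that γT ∘ τ = λ ∘ Tγ (both sides of type TR ⇒ ST). Define the trivial weak distributive law σ := η^R μ^S ∘ Sγ : SR ⇒ RS. Then the Yang–Baxter equation σT ∘ Sτ ∘ λR = Rλ ∘ τS ∘ Tσ holds. -/

import Mathlib

open CategoryTheory

universe v u

/-- Raw monad data: an endofunctor together with unit and multiplication components
(the monad laws are not required). -/
structure MonadData (C : Type u) [Category.{v} C] where
  F : C ⥤ C
  unit : ∀ X : C, X ⟶ F.obj X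
  mult : ∀ X : C, F.obj (F.obj X) ⟶ F.obj X

variable {C : Type u} [Category.{v} C]

/-- The data underlying a monad. -/
def CategoryTheory.Monad.data (T : Monad C) : MonadData C where
  F := T.toFunctor
  unit X := T.η.app X
  mult X := T.μ.app X

/-- The monad laws (two unitality axioms and associativity) for raw monad data. -/
def MonadData.IsMonad (A : MonadData C) : Prop :=
  (∀ X : C, A.unit (A.F.obj X) ≫ A.mult X = 𝟙 (A.F.obj X)) ∧
  (∀ X : C, A.F.map (A.unit X) ≫ A.mult X = 𝟙 (A.F.obj X)) ∧
  (∀ X : C, A.F.map (A.mult X) ≫ A.mult X = A.mult (A.F.obj X) ≫ A.mult X)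

/-- Axiom (η+) for a law `l : TS ⇒ ST` of the monad `A` (playing `S`) over `B` (playing `T`). -/
def EtaPlus (A B : MonadData C) (l : (A.F ⋙ B.F) ⟶ (B.F ⋙ A.F)) : Prop :=
  ∀ X : C, B.F.map (A.unit X) ≫ l.app X = A.unit (B.F.obj X)

/-- Axiom (μ+): `λ ∘ Tμ^S = μ^S T ∘ Sλ ∘ λS`. -/
def MuPlus (A B : MonadData C) (l : (A.F ⋙ B.F) ⟶ (B.F ⋙ A.F)) : Prop :=
  ∀ X : C, B.F.map (A.mult X) ≫ l.app X =
    l.app (A.F.obj X) ≫ A.F.map (l.app X) ≫ A.mult (B.F.obj X)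

/-- Axiom (η−): `λ ∘ η^T S = Sη^T`. -/
def EtaMinus (A B : MonadData C) (l : (A.F ⋙ B.F) ⟶ (B.F ⋙ A.F)) : Prop :=
  ∀ X : C, B.unit (A.F.obj X) ≫ l.app X = A.F.map (B.unit X)

/-- Axiom (μ−): `λ ∘ μ^T S = Sμ^T ∘ λT ∘ Tλ`. -/
def MuMinus (A B : MonadData C) (l : (A.F ⋙ B.F) ⟶ (B.F ⋙ A.F)) : Prop :=
  ∀ X : C, B.mult (A.F.obj X) ≫ l.app X =
    B.F.map (l.app X) ≫ l.app (B.F.obj X) ≫ A.F.map (B.mult X)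

/-- A weak distributive law satisfies (η+), (μ+) and (μ−). -/
def IsWDL (A B : MonadData C) (l : (A.F ⋙ B.F) ⟶ (B.F ⋙ A.F)) : Prop :=
  EtaPlus A B l ∧ MuPlus A B l ∧ MuMinus A B l

/-- A distributive law satisfies all four axioms. -/
def IsDL (A B : MonadData C) (l : (A.F ⋙ B.F) ⟶ (B.F ⋙ A.F)) : Prop :=
  EtaPlus A B l ∧ MuPlus A B l ∧ EtaMinus A B l ∧ MuMinus A B l

/-- The natural family `κ := Sμ^T ∘ λT ∘ η^T ST : ST ⇒ ST` associated with a law. -/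
def lawKappa (A B : MonadData C) (l : (A.F ⋙ B.F) ⟶ (B.F ⋙ A.F)) (X : C) :
    A.F.obj (B.F.obj X) ⟶ A.F.obj (B.F.obj X) :=
  B.unit (A.F.obj (B.F.obj X)) ≫ l.app (B.F.obj X) ≫ A.F.map (B.mult X)

/-- The Yang–Baxter equation `σT ∘ Sτ ∘ λR = Rλ ∘ τS ∘ Tσ` for laws
`l : TS ⇒ ST`, `s : SR ⇒ RS`, `t : TR ⇒ RT`. -/
def YangBaxter (Rm Sm Tm : MonadData C)
    (l : (Sm.F ⋙ Tm.F) ⟶ (Tm.F ⋙ Sm.F))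
    (s : (Rm.F ⋙ Sm.F) ⟶ (Sm.F ⋙ Rm.F))
    (t : (Rm.F ⋙ Tm.F) ⟶ (Tm.F ⋙ Rm.F)) : Prop :=
  ∀ X : C, l.app (Rm.F.obj X) ≫ Sm.F.map (t.app X) ≫ s.app (Tm.F.obj X) =
    Tm.F.map (s.app X) ≫ t.app (Sm.F.obj X) ≫ Rm.F.map (l.app X)

/-- The composite monad data `S ∘_λ T = (ST, η^S η^T, μ^S μ^T ∘ SλT)` of a distributive law. -/
def compData (A B : MonadData C) (l : (A.F ⋙ B.F) ⟶ (B.F ⋙ A.F)) : MonadData C where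
  F := B.F ⋙ A.F
  unit X := B.unit X ≫ A.unit (B.F.obj X)
  mult X := A.F.map (l.app (B.F.obj X)) ≫ A.F.map (A.F.map (B.mult X)) ≫ A.mult (B.F.obj X)

/-- The weak composite monad data `S •_λ T` built from a splitting `(K, p, i)` of `κ`. -/
def wcompData (A B : MonadData C) (l : (A.F ⋙ B.F) ⟶ (B.F ⋙ A.F))
    (K : C ⥤ C) (p : (B.F ⋙ A.F) ⟶ K) (i : K ⟶ (B.F ⋙ A.F)) : MonadData C where
  F := K
  unit X := B.unit X ≫ A.unit (B.F.obj X) ≫ p.app X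
  mult X := i.app (K.obj X) ≫ A.F.map (B.F.map (i.app X)) ≫ A.F.map (l.app (B.F.obj X)) ≫
    A.F.map (A.F.map (B.mult X)) ≫ A.mult (B.F.obj X) ≫ p.app X

/-- The trivial weak distributive law `η^R μ^S ∘ Sγ : SR ⇒ RS` induced by a monad
morphism `γ : R ⇒ S`. -/
def trivLaw {C : Type u} [Category.{v} C] (R S : Monad C)
    (γ : R.toFunctor ⟶ S.toFunctor) :
    (R.toFunctor ⋙ S.toFunctor) ⟶ (S.toFunctor ⋙ R.toFunctor) :=
  Functor.whiskerRight γ S.toFunctor ≫ S.μ ≫ Functor.whiskerLeft S.toFunctor R.η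

/-!
Unfold `σ = η^R S ∘ μ^S ∘ Sγ` on the left-hand side. The compatibility `γT ∘ τ = λ ∘ Tγ` turns
`SγT ∘ Sτ` into `Sλ ∘ STγ`; naturality of `λ` and (μ+) for `λ` then absorb `μ^S T ∘ Sλ ∘ λS`
into `λ ∘ Tμ^S`. Finally `η^R ST ∘ λ = Rλ ∘ η^R TS`, and (η+) for `τ` rewrites `η^R TS` as
`τS ∘ Tη^R S`, which completes `Tσ` on the right.
-/

theorem MuPlus.app_comp_map_bind {A B : MonadData C} {l : (A.F ⋙ B.F) ⟶ (B.F ⋙ A.F)}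
    (hl : MuPlus A B l) {X Y : C} (g : Y ⟶ A.F.obj X) :
    l.app Y ≫ A.F.map (B.F.map g) ≫ A.F.map (l.app X) ≫ A.mult (B.F.obj X) =
      B.F.map (A.F.map g ≫ A.mult X) ≫ l.app X := by
  have hnat : l.app Y ≫ A.F.map (B.F.map g) = B.F.map (A.F.map g) ≫ l.app (A.F.obj X) :=
    (l.naturality g).symm
  rw [reassoc_of% hnat, B.F.map_comp_assoc, hl X]

theorem EtaPlus.comp_unit {R : Monad C} {B : MonadData C}
    {t : (R.toFunctor ⋙ B.F) ⟶ (B.F ⋙ R.toFunctor)}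
    (ht : EtaPlus R.data B t) {Y W : C} (k : B.F.obj Y ⟶ W) :
    k ≫ R.η.app W = B.F.map (R.η.app Y) ≫ t.app Y ≫ R.map k := by
  have hY : B.F.map (R.η.app Y) ≫ t.app Y = R.η.app (B.F.obj Y) := ht Y
  rw [reassoc_of% hY]
  exact R.η.naturality k

@[simp]
theorem trivLaw_app (R S : Monad C) (γ : R.toFunctor ⟶ S.toFunctor) (X : C) :
    (trivLaw R S γ).app X = S.map (γ.app X) ≫ S.μ.app X ≫ R.η.app (S.obj X) :=
  rfl

theorem yb_trivial_sigma_general {C : Type u} [Category.{v} C] (R S T : Monad C)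
    (l : (S.toFunctor ⋙ T.toFunctor) ⟶ (T.toFunctor ⋙ S.toFunctor))
    (t : (R.toFunctor ⋙ T.toFunctor) ⟶ (T.toFunctor ⋙ R.toFunctor))
    (γ : R.toFunctor ⟶ S.toFunctor)
    (ht : IsWDL R.data T.data t) (hl : IsWDL S.data T.data l)
    (hcompat : ∀ X : C, t.app X ≫ γ.app (T.obj X) = T.map (γ.app X) ≫ l.app X) :
    YangBaxter R.data S.data T.data l (trivLaw R S γ) t := by
  intro X
  simp only [Monad.data, trivLaw_app]
  calc l.app (R.obj X) ≫ S.map (t.app X) ≫ S.map (γ.app (T.obj X)) ≫ S.μ.app (T.obj X) ≫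
        R.η.app (S.obj (T.obj X))
      = l.app (R.obj X) ≫ S.map (T.map (γ.app X)) ≫ S.map (l.app X) ≫ S.μ.app (T.obj X) ≫
        R.η.app (S.obj (T.obj X)) := by
        rw [← S.map_comp_assoc, hcompat, S.map_comp_assoc]
    _ = T.map (S.map (γ.app X) ≫ S.μ.app X) ≫ l.app X ≫ R.η.app (S.obj (T.obj X)) :=
        (reassoc_of% hl.2.1.app_comp_map_bind (γ.app X)) _
    _ = T.map (S.map (γ.app X) ≫ S.μ.app X ≫ R.η.app (S.obj X)) ≫ t.app (S.obj X) ≫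
        R.map (l.app X) := by
        have hunit : l.app X ≫ R.η.app (S.obj (T.obj X)) =
            T.map (R.η.app (S.obj X)) ≫ t.app (S.obj X) ≫ R.map (l.app X) :=
          ht.1.comp_unit (l.app X)
        simp only [hunit, T.map_comp, Category.assoc]

/-- second half of Proposition 4.6. Let `τ : TR ⇒ RT` and
`λ : TS ⇒ ST` be weak distributive laws and `γ : R ⇒ S` a monad morphism with
`γT ∘ τ = λ ∘ Tγ`. Then the trivial weak distributive law `σ := η^R μ^S ∘ Sγ`
satisfies the Yang–Baxter equation with `λ` and `τ`. -/
theorem yb_trivial_sigma {C : Type u} [Category.{v} C] (R S T : Monad C)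
    (l : (S.toFunctor ⋙ T.toFunctor) ⟶ (T.toFunctor ⋙ S.toFunctor))
    (t : (R.toFunctor ⋙ T.toFunctor) ⟶ (T.toFunctor ⋙ R.toFunctor))
    (γ : R.toFunctor ⟶ S.toFunctor)
    (ht : IsWDL R.data T.data t) (hl : IsWDL S.data T.data l)
    (hγη : ∀ X : C, R.η.app X ≫ γ.app X = S.η.app X)
    (hγμ : ∀ X : C, R.μ.app X ≫ γ.app X = γ.app (R.obj X) ≫ S.map (γ.app X) ≫ S.μ.app X)
    (hcompat : ∀ X : C, t.app X ≫ γ.app (T.obj X) = T.map (γ.app X) ≫ l.app X) :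
    YangBaxter R.data S.data T.data l (trivLaw R S γ) t :=
  yb_trivial_sigma_general R S T l t γ ht hl hcompat
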